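/- Let 𝒢 be a TVG in class R whose underlying graph is the path v_0 v_1 … v_n, with an agent starting at v_k at time 0. Then there exists an optimal solution to DMVP whose underlying walk is either v_k v_{k−1} … v_0 v_1 … v_n (first proceed monotonically to v_0, then monotonically to v_n) or v_k v_{k+1} … v_n v_{n−1} … v_0 (first proceed monotonically to v_n, then monotonically to v_0); when k = 0 or k = n this is the single monotone traversal of the path. -/

import Mathlib

/-- A time-varying graph (TVG): an underlying simple graph together with a presence
function telling when each (directed rendering of an) edge is available; every edge
takes one time step to cross. -/
structure TVG (V : Type) where
  G : SimpleGraph V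
  avail : V → V → ℕ → Prop

namespace TVG

variable {V : Type}

/-- A step of a journey: traverse the edge from `x.1` to `x.2.1`, starting at time
`x.2.2` and arriving at time `x.2.2 + 1`. -/
abbrev Step (V : Type) := V × V × ℕ

/-- Consecutive steps of a journey: the next step starts where the previous one ended,
at a strictly later time (waiting in between is allowed). -/
def Linked (a b : Step V) : Prop := b.1 = a.2.1 ∧ a.2.2 + 1 ≤ b.2.2

/-- A journey: each step crosses an edge of the underlying graph that is available at
that time, and consecutive steps are linked. -/
def IsJourney (𝒢 : TVG V) (J : List (Step V)) : Prop :=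
  (∀ x ∈ J, 𝒢.G.Adj x.1 x.2.1 ∧ 𝒢.avail x.1 x.2.1 x.2.2) ∧ J.Chain' Linked

/-- The journey starts at vertex `u`. -/
def startsAt (J : List (Step V)) (u : V) : Prop := ∀ x ∈ J.head?, x.1 = u

/-- The journey departs at or after time `t`. -/
def departsAfter (J : List (Step V)) (t : ℕ) : Prop := ∀ x ∈ J.head?, t ≤ x.2.2

/-- Departure date of a journey started at time `t0`. -/
def departure (J : List (Step V)) (t0 : ℕ) : ℕ := (J.head?).elim t0 fun x => x.2.2

/-- Arrival date of a journey started at time `t0`. -/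
def arrival (J : List (Step V)) (t0 : ℕ) : ℕ := (J.getLast?).elim t0 fun x => x.2.2 + 1

/-- Final vertex of a journey started at vertex `s`. -/
def endAt (J : List (Step V)) (s : V) : V := (J.getLast?).elim s fun x => x.2.1

/-- The journey, started at `s`, visits (covers) vertex `v`. -/
def visits (J : List (Step V)) (s v : V) : Prop := v = s ∨ ∃ x ∈ J, x.2.1 = v

/-- A covering journey from `s` starting at time `0`: a journey that starts at `s`
and visits every vertex. -/
def IsCoveringFrom (𝒢 : TVG V) (J : List (Step V)) (s : V) : Prop :=
  𝒢.IsJourney J ∧ startsAt J s ∧ ∀ v : V, visits J s v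

/-- Class `R` (recurrent edges): connected underlying graph, lifetime `ℕ`, and every
edge is available at arbitrarily late times. -/
def ClassR (𝒢 : TVG V) : Prop :=
  𝒢.G.Connected ∧ ∀ u v, 𝒢.G.Adj u v → ∀ t, ∃ t', t < t' ∧ 𝒢.avail u v t'

/-- Class `B` (time-bounded recurrent edges): every edge is available at some time in
`[t, t + Δ)` for every `t`. -/
def ClassB (𝒢 : TVG V) (Δ : ℕ) : Prop :=
  𝒢.G.Connected ∧ ∀ u v, 𝒢.G.Adj u v → ∀ t, ∃ t', t ≤ t' ∧ t' < t + Δ ∧ 𝒢.avail u v t'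

/-- Class `P` (periodic edges): the presence function is periodic with period `p`. -/
def ClassP (𝒢 : TVG V) (p : ℕ) : Prop :=
  𝒢.G.Connected ∧ ∀ u v t, 𝒢.avail u v t ↔ 𝒢.avail u v (t + p)

/-- Presence function obtained by running the given (possibly time-dependent) edge
relations for the given durations, one block after another, starting at time `0`;
each block relation receives the local time within its block. -/
def schedAvail : List ((V → V → ℕ → Prop) × ℕ) → V → V → ℕ → Prop
  | [], _, _, _ => False
  | (r, d) :: rest, u, v, t => if t < d then r u v t else schedAvail rest u v (t - d)

end TVG

open TVG

/-- The vertex sequence of the underlying walk of a journey started at `s`. -/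
def vertSeq {V : Type} (J : List (TVG.Step V)) (s : V) : List V :=
  s :: J.map fun x => x.2.1

open Fin.NatCast in
/-- The walk `v_k, v_{k-1}, …, v_0, v_1, …, v_n`: first proceed monotonically to `v_0`,
then monotonically to `v_n`. -/
def leftFirst (n k : ℕ) : List (Fin (n + 1)) :=
  ((List.range (k + 1)).reverse ++ (List.range n).map (· + 1)).map
    fun i => ((i : ℕ) : Fin (n + 1))

open Fin.NatCast in
/-- The walk `v_k, v_{k+1}, …, v_n, v_{n-1}, …, v_0`: first proceed monotonically to
`v_n`, then monotonically to `v_0`. -/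
def rightFirst (n k : ℕ) : List (Fin (n + 1)) :=
  ((List.range (n - k + 1)).map (· + k) ++ (List.range n).reverse).map
    fun i => ((i : ℕ) : Fin (n + 1))

/-!
On a path, a journey from `v_i` ending at `v_m` can be shortcut to the monotone journey from
`v_i` to `v_m` without arriving later: by induction along the journey, either its first step
heads towards `v_m` and is kept, or the monotone shortcut from the next vertex begins by stepping
straight back, and both steps are dropped. An optimal covering journey reaches one end of the
path before the other, say `v_0` before `v_n`; shortcutting the leg up to `v_0` and the leg from
`v_0` to `v_n` gives the sweep `v_k … v_0 … v_n`, arriving no later, hence again optimal. Optimal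
covering journeys exist because, with recurrent edges, the sweep itself can be travelled.
-/

namespace TVG

variable {V : Type}

theorem arrival_append (A B : List (Step V)) (t : ℕ) :
    arrival (A ++ B) t = arrival B (arrival A t) := by
  simp only [arrival, List.getLast?_append]
  cases B.getLast? <;> rfl

theorem arrival_cons (x : Step V) (J : List (Step V)) (t : ℕ) :
    arrival (x :: J) t = arrival J (x.2.2 + 1) :=
  arrival_append [x] J t

theorem arrival_mono (J : List (Step V)) : Monotone (arrival J) := by
  intro t t' h
  simp only [arrival]
  cases J.getLast? <;> simp [h]

theorem endAt_append (A B : List (Step V)) (s : V) :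
    endAt (A ++ B) s = endAt B (endAt A s) := by
  simp only [endAt, List.getLast?_append]
  cases B.getLast? <;> rfl

theorem endAt_cons (x : Step V) (J : List (Step V)) (s : V) :
    endAt (x :: J) s = endAt J x.2.1 :=
  endAt_append [x] J s

theorem visits_iff_mem_vertSeq {J : List (Step V)} {s v : V} :
    visits J s v ↔ v ∈ vertSeq J s := by
  simp [visits, vertSeq, eq_comm]

theorem exists_eq_append_endAt_eq_of_visits {J : List (Step V)} {s v : V}
    (h : visits J s v) : ∃ A B, J = A ++ B ∧ endAt A s = v := by
  rcases h with rfl | ⟨x, hx, rfl⟩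
  · exact ⟨[], J, rfl, rfl⟩
  · obtain ⟨P, Q, rfl⟩ := List.append_of_mem hx
    exact ⟨P ++ [x], Q, by simp, by simp [endAt]⟩

def IsJourneyFrom (𝒢 : TVG V) (J : List (Step V)) (s : V) (t : ℕ) : Prop :=
  𝒢.IsJourney J ∧ startsAt J s ∧ departsAfter J t

variable {𝒢 : TVG V}

theorem isJourney_iff {J : List (Step V)} :
    𝒢.IsJourney J ↔ (∀ x ∈ J, 𝒢.G.Adj x.1 x.2.1 ∧ 𝒢.avail x.1 x.2.1 x.2.2) ∧
      J.IsChain Linked :=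
  Iff.rfl

theorem isJourneyFrom_nil (s : V) (t : ℕ) : 𝒢.IsJourneyFrom [] s t :=
  ⟨⟨by simp, List.isChain_nil⟩, by simp [startsAt], by simp [departsAfter]⟩

theorem isJourneyFrom_cons_iff {x : Step V} {J : List (Step V)} {s : V} {t : ℕ} :
    𝒢.IsJourneyFrom (x :: J) s t ↔ x.1 = s ∧ t ≤ x.2.2 ∧ 𝒢.G.Adj x.1 x.2.1 ∧
      𝒢.avail x.1 x.2.1 x.2.2 ∧ 𝒢.IsJourneyFrom J x.2.1 (x.2.2 + 1) := by
  simp only [IsJourneyFrom, isJourney_iff, startsAt, departsAfter, Linked, List.isChain_cons,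
    List.forall_mem_cons, List.head?_cons, Option.mem_def, Option.some.injEq, forall_eq',
    imp_and, forall_and]
  tauto

theorem isJourneyFrom_append_iff {A B : List (Step V)} {s : V} {t : ℕ} :
    𝒢.IsJourneyFrom (A ++ B) s t ↔
      𝒢.IsJourneyFrom A s t ∧ 𝒢.IsJourneyFrom B (endAt A s) (arrival A t) := by
  induction A generalizing s t with
  | nil => simp [isJourneyFrom_nil, endAt, arrival]
  | cons x A ih =>
    simp only [List.cons_append, isJourneyFrom_cons_iff, ih, endAt_cons, arrival_cons,
      and_assoc]

theorem IsJourneyFrom.mono {J : List (Step V)} {s : V} {t t' : ℕ}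
    (h : 𝒢.IsJourneyFrom J s t) (ht : t' ≤ t) : 𝒢.IsJourneyFrom J s t' :=
  ⟨h.1, h.2.1, fun x hx => ht.trans (h.2.2 x hx)⟩

theorem IsJourneyFrom.le_arrival {J : List (Step V)} {s : V} {t : ℕ}
    (h : 𝒢.IsJourneyFrom J s t) : t ≤ arrival J t := by
  induction J generalizing s t with
  | nil => simp [arrival]
  | cons x J ih =>
    obtain ⟨-, ht, -, -, hJ⟩ := isJourneyFrom_cons_iff.1 h
    rw [arrival_cons]
    exact (ht.trans (Nat.le_succ _)).trans (ih hJ)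

theorem IsJourneyFrom.arrival_le_append {A B : List (Step V)} {s : V} {t : ℕ}
    (h : 𝒢.IsJourneyFrom (A ++ B) s t) : arrival A t ≤ arrival (A ++ B) t := by
  rw [arrival_append]
  exact (isJourneyFrom_append_iff.1 h).2.le_arrival

end TVG

/-- The indices visited, after `i`, by the monotone walk from `i` to `m` on `ℕ`. -/
def sweep (i m : ℕ) : List ℕ :=
  if i ≤ m then List.range' (i + 1) (m - i) else (List.range' m (i - m)).reverse

theorem sweep_self (i : ℕ) : sweep i i = [] := by
  simp [sweep]

theorem sweep_of_lt {i m : ℕ} (h : i < m) : sweep i m = (i + 1) :: sweep (i + 1) m := by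
  rw [sweep, sweep, if_pos h.le, if_pos (show i + 1 ≤ m from h),
    show m - i = m - (i + 1) + 1 by omega, List.range'_succ]

theorem sweep_of_gt {i m : ℕ} (h : m < i) : sweep i m = (i - 1) :: sweep (i - 1) m := by
  rw [sweep, sweep, if_neg (by omega), show i - m = i - 1 - m + 1 by omega,
    List.range'_concat, List.reverse_append]
  split_ifs with h'
  · obtain rfl : m = i - 1 := by omega
    simp
  · simp
    omega

theorem getD_getLast?_sweep (i m : ℕ) : (sweep i m).getLast?.getD i = m := by
  unfold sweep
  split_ifs with h
  · rw [List.getLast?_range']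
    split_ifs <;> simp only [Option.getD_none, Option.getD_some] <;> omega
  · rw [List.getLast?_reverse, List.head?_range', if_neg (by omega)]
    rfl

theorem sweep_eq_cons {i m j : ℕ} {L : List ℕ} (h : sweep i m = j :: L) :
    (i + 1 = j ∨ j + 1 = i) ∧ j ≤ max i m ∧ L = sweep j m := by
  rcases lt_trichotomy i m with him | rfl | him
  · rw [sweep_of_lt him, List.cons.injEq] at h
    obtain ⟨rfl, rfl⟩ := h
    exact ⟨by omega, by omega, rfl⟩
  · simp [sweep_self] at h
  · rw [sweep_of_gt him, List.cons.injEq] at h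
    obtain ⟨rfl, rfl⟩ := h
    exact ⟨by omega, by omega, rfl⟩

theorem sweep_of_adj {i j m : ℕ} (hij : i + 1 = j ∨ j + 1 = i) (him : i ≠ m) :
    sweep i m = j :: sweep j m ∨ sweep j m = i :: sweep i m := by
  rcases hij with rfl | rfl <;> rcases Nat.lt_or_gt_of_ne him with h | h
  · exact Or.inl (sweep_of_lt h)
  · exact Or.inr (by simpa using sweep_of_gt (by omega : m < i + 1))
  · exact Or.inr (sweep_of_lt (by omega))
  · exact Or.inl (by simpa using sweep_of_gt h)

theorem sweep_zero_right (k : ℕ) : sweep k 0 = (List.range k).reverse := by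
  cases k with
  | zero => rfl
  | succ k => simp [sweep, List.range_eq_range']

theorem sweep_zero_left (n : ℕ) : sweep 0 n = (List.range n).map (· + 1) := by
  simp [sweep, List.range'_eq_map_range, add_comm]

theorem cons_sweep_of_le {k n : ℕ} (hk : k ≤ n) :
    k :: sweep k n = (List.range (n - k + 1)).map (· + k) := by
  simp only [sweep, if_pos hk, List.range_succ_eq_map, List.range'_eq_map_range, List.map_cons,
    List.map_map, Function.comp_def]
  exact List.cons_eq_cons.2 ⟨(zero_add k).symm, List.map_congr_left fun _ _ => by omega⟩

open Fin.NatCast in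
theorem map_val_natCast {n : ℕ} {L : List ℕ} (h : ∀ x ∈ L, x < n + 1) :
    L.map (fun i => ((i : ℕ) : Fin (n + 1)).val) = L := by
  conv_rhs => rw [← List.map_id L]
  exact List.map_congr_left fun x hx => by simp [Nat.mod_eq_of_lt (h x hx)]

theorem map_val_leftFirst {n k : ℕ} (hk : k ≤ n) :
    (leftFirst n k).map Fin.val = k :: (sweep k 0 ++ sweep 0 n) := by
  rw [leftFirst, List.map_map, Function.comp_def, map_val_natCast, sweep_zero_right,
    sweep_zero_left, List.range_succ, List.reverse_append, List.reverse_singleton,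
    List.singleton_append, List.cons_append]
  simp only [List.mem_append, List.mem_reverse, List.mem_range, List.mem_map]
  omega

theorem map_val_rightFirst {n k : ℕ} (hk : k ≤ n) :
    (rightFirst n k).map Fin.val = k :: (sweep k n ++ sweep n 0) := by
  rw [rightFirst, List.map_map, Function.comp_def, map_val_natCast, sweep_zero_right,
    ← List.cons_append, cons_sweep_of_le hk]
  simp only [List.mem_append, List.mem_reverse, List.mem_range, List.mem_map]
  omega

open Fin.NatCast in
theorem mem_leftFirst {n : ℕ} (k : ℕ) (v : Fin (n + 1)) : v ∈ leftFirst n k := by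
  refine List.mem_map.2 ⟨v, ?_, Fin.cast_val_eq_self v⟩
  simp only [List.mem_append, List.mem_reverse, List.mem_range, List.mem_map]
  by_cases hv : v.val = 0
  · exact Or.inl (by omega)
  · exact Or.inr ⟨v.val - 1, by omega, by omega⟩

open Fin.NatCast in
theorem mem_rightFirst {n k : ℕ} (hk : k ≤ n) (v : Fin (n + 1)) : v ∈ rightFirst n k := by
  refine List.mem_map.2 ⟨v, ?_, Fin.cast_val_eq_self v⟩
  simp only [List.mem_append, List.mem_reverse, List.mem_range, List.mem_map]
  by_cases hv : v.val = n
  · exact Or.inl ⟨n - k, by omega, by omega⟩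
  · exact Or.inr (by omega)

namespace TVG

variable {n : ℕ} {𝒢 : TVG (Fin (n + 1))}

theorem endAt_val_eq_of_map_eq_sweep {J : List (Step (Fin (n + 1)))} {i : Fin (n + 1)} {m : ℕ}
    (h : J.map (·.2.1.val) = sweep i m) : (endAt J i).val = m := by
  rw [← getD_getLast?_sweep i m, ← h, List.getLast?_map]
  simp only [endAt]
  cases J.getLast? <;> rfl

theorem exists_isJourneyFrom_map_eq_sweep (hG : 𝒢.G = SimpleGraph.pathGraph (n + 1))
    (hrec : ∀ u v, 𝒢.G.Adj u v → ∀ t, ∃ t', t < t' ∧ 𝒢.avail u v t') (i m : Fin (n + 1))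
    (t : ℕ) : ∃ J, 𝒢.IsJourneyFrom J i t ∧ J.map (·.2.1.val) = sweep i m := by
  suffices ∀ L (i : Fin (n + 1)) t, sweep i m = L →
      ∃ J, 𝒢.IsJourneyFrom J i t ∧ J.map (·.2.1.val) = L from this _ i t rfl
  intro L
  induction L with
  | nil => exact fun i t _ => ⟨[], isJourneyFrom_nil i t, rfl⟩
  | cons j L ih =>
    intro i t hL
    obtain ⟨hij, hj, rfl⟩ := sweep_eq_cons hL
    let j' : Fin (n + 1) := ⟨j, by omega⟩
    have hadj : 𝒢.G.Adj i j' := hG ▸ SimpleGraph.pathGraph_adj.2 hij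
    obtain ⟨t', htt', hav⟩ := hrec i j' hadj t
    obtain ⟨J, hJ, hmap⟩ := ih j' (t' + 1) rfl
    exact ⟨(i, j', t') :: J, isJourneyFrom_cons_iff.2 ⟨rfl, htt'.le, hadj, hav, hJ⟩,
      by simp [j', hmap]⟩

theorem IsJourneyFrom.exists_map_eq_sweep (hG : 𝒢.G = SimpleGraph.pathGraph (n + 1))
    {J : List (Step (Fin (n + 1)))} {i : Fin (n + 1)} {t : ℕ} (h : 𝒢.IsJourneyFrom J i t) :
    ∃ J', 𝒢.IsJourneyFrom J' i t ∧ J'.map (·.2.1.val) = sweep i (endAt J i).val ∧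
      arrival J' t ≤ arrival J t := by
  induction J generalizing i t with
  | nil => exact ⟨[], h, by simp [endAt, sweep_self], le_rfl⟩
  | cons x J ih =>
    obtain ⟨rfl, htx, hadj, hav, hJ⟩ := isJourneyFrom_cons_iff.1 h
    obtain ⟨J'', hJ'', hmap, harr⟩ := ih hJ
    rw [endAt_cons]
    by_cases him : x.1.val = (endAt J x.2.1).val
    · exact ⟨[], isJourneyFrom_nil _ _, by simp [him, sweep_self], h.le_arrival⟩
    rcases sweep_of_adj (SimpleGraph.pathGraph_adj.1 (hG ▸ hadj)) him with htoward | haway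
    · refine ⟨x :: J'', isJourneyFrom_cons_iff.2 ⟨rfl, htx, hadj, hav, hJ''⟩,
        by simp [hmap, htoward], ?_⟩
      rwa [arrival_cons, arrival_cons]
    · -- the monotone journey from `x.2.1` starts by stepping back to `x.1`: drop both steps
      rw [haway] at hmap
      obtain _ | ⟨y, J₃⟩ := J''
      · simp at hmap
      obtain ⟨-, hty, -, -, hJ₃⟩ := isJourneyFrom_cons_iff.1 hJ''
      simp only [List.map_cons, List.cons.injEq] at hmap
      rw [Fin.ext hmap.1] at hJ₃
      refine ⟨J₃, hJ₃.mono (by omega), hmap.2, ?_⟩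
      calc arrival J₃ t ≤ arrival J₃ (y.2.2 + 1) := arrival_mono J₃ (by omega)
        _ = arrival (y :: J₃) (x.2.2 + 1) := (arrival_cons y J₃ _).symm
        _ ≤ arrival J (x.2.2 + 1) := harr
        _ = arrival (x :: J) t := (arrival_cons x J t).symm

theorem IsJourneyFrom.exists_map_eq_sweep_append_sweep
    (hG : 𝒢.G = SimpleGraph.pathGraph (n + 1)) {A C B : List (Step (Fin (n + 1)))}
    {i : Fin (n + 1)} {t : ℕ} (h : 𝒢.IsJourneyFrom (A ++ C ++ B) i t) :
    ∃ J, 𝒢.IsJourneyFrom J i t ∧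
      J.map (·.2.1.val) =
        sweep i (endAt A i).val ++ sweep (endAt A i).val (endAt (A ++ C) i).val ∧
      arrival J t ≤ arrival (A ++ C ++ B) t := by
  obtain ⟨hA, hC⟩ := isJourneyFrom_append_iff.1 (isJourneyFrom_append_iff.1 h).1
  obtain ⟨E₁, hE₁, hmap₁, harr₁⟩ := hA.exists_map_eq_sweep hG
  obtain ⟨E₂, hE₂, hmap₂, harr₂⟩ := hC.exists_map_eq_sweep hG
  have hend : endAt E₁ i = endAt A i := Fin.ext (endAt_val_eq_of_map_eq_sweep hmap₁)
  refine ⟨E₁ ++ E₂, isJourneyFrom_append_iff.2 ⟨hE₁, hend ▸ hE₂.mono harr₁⟩,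
    by simp [hmap₁, hmap₂, endAt_append], ?_⟩
  calc arrival (E₁ ++ E₂) t = arrival E₂ (arrival E₁ t) := arrival_append _ _ _
    _ ≤ arrival E₂ (arrival A t) := arrival_mono E₂ harr₁
    _ ≤ arrival C (arrival A t) := harr₂
    _ = arrival (A ++ C) t := (arrival_append _ _ _).symm
    _ ≤ arrival (A ++ C ++ B) t := h.arrival_le_append

theorem vertSeq_eq_of_map_val_eq {J : List (Step (Fin (n + 1)))} {k : Fin (n + 1)}
    {M : List (Fin (n + 1))} (h : M.map Fin.val = k.val :: J.map (·.2.1.val)) :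
    vertSeq J k = M :=
  List.map_injective_iff.2 Fin.val_injective <| by
    simpa [vertSeq, Function.comp_def] using h.symm

theorem vertSeq_eq_leftFirst {J : List (Step (Fin (n + 1)))} {k : Fin (n + 1)}
    (h : J.map (·.2.1.val) = sweep k 0 ++ sweep 0 n) : vertSeq J k = leftFirst n k := by
  refine vertSeq_eq_of_map_val_eq ?_
  rw [map_val_leftFirst k.is_le, h]

theorem vertSeq_eq_rightFirst {J : List (Step (Fin (n + 1)))} {k : Fin (n + 1)}
    (h : J.map (·.2.1.val) = sweep k n ++ sweep n 0) : vertSeq J k = rightFirst n k := by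
  refine vertSeq_eq_of_map_val_eq ?_
  rw [map_val_rightFirst k.is_le, h]

theorem isCoveringFrom_of_vertSeq {J : List (Step (Fin (n + 1)))} {k : Fin (n + 1)} {t : ℕ}
    (hJ : 𝒢.IsJourneyFrom J k t)
    (hsweep : vertSeq J k = leftFirst n k ∨ vertSeq J k = rightFirst n k) :
    𝒢.IsCoveringFrom J k := by
  refine ⟨hJ.1, hJ.2.1, fun v => visits_iff_mem_vertSeq.2 ?_⟩
  rcases hsweep with h | h <;> rw [h]
  · exact mem_leftFirst k v
  · exact mem_rightFirst k.is_le v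

theorem exists_isCoveringFrom (hG : 𝒢.G = SimpleGraph.pathGraph (n + 1))
    (hrec : ∀ u v, 𝒢.G.Adj u v → ∀ t, ∃ t', t < t' ∧ 𝒢.avail u v t') (k : Fin (n + 1)) :
    ∃ J, 𝒢.IsCoveringFrom J k := by
  obtain ⟨E₁, hE₁, hmap₁⟩ := exists_isJourneyFrom_map_eq_sweep hG hrec k 0 0
  obtain ⟨E₂, hE₂, hmap₂⟩ :=
    exists_isJourneyFrom_map_eq_sweep hG hrec 0 (Fin.last n) (arrival E₁ 0)
  have hend : endAt E₁ k = 0 := Fin.ext (endAt_val_eq_of_map_eq_sweep hmap₁)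
  refine ⟨E₁ ++ E₂, isCoveringFrom_of_vertSeq
    (isJourneyFrom_append_iff.2 ⟨hE₁, hend ▸ hE₂⟩) (Or.inl (vertSeq_eq_leftFirst ?_))⟩
  simp [hmap₁, hmap₂]

theorem IsCoveringFrom.exists_sweeps_le (hG : 𝒢.G = SimpleGraph.pathGraph (n + 1))
    {J : List (Step (Fin (n + 1)))} {k : Fin (n + 1)} (hJ : 𝒢.IsCoveringFrom J k) :
    ∃ J', 𝒢.IsJourneyFrom J' k 0 ∧
      (vertSeq J' k = leftFirst n k ∨ vertSeq J' k = rightFirst n k) ∧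
      arrival J' 0 ≤ arrival J 0 := by
  have hJ₀ : 𝒢.IsJourneyFrom J k 0 := ⟨hJ.1, hJ.2.1, fun _ _ => Nat.zero_le _⟩
  obtain ⟨A₀, B₀, hJA₀, hA₀⟩ := exists_eq_append_endAt_eq_of_visits (hJ.2.2 0)
  obtain ⟨Aₙ, Bₙ, hJAₙ, hAₙ⟩ := exists_eq_append_endAt_eq_of_visits (hJ.2.2 (Fin.last n))
  rcases List.prefix_or_prefix_of_prefix ⟨B₀, hJA₀.symm⟩ ⟨Bₙ, hJAₙ.symm⟩ with ⟨C, rfl⟩ | ⟨C, rfl⟩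
  · rw [hJAₙ] at hJ₀ ⊢
    obtain ⟨J', hJ', hmap, harr⟩ := hJ₀.exists_map_eq_sweep_append_sweep hG
    rw [hA₀, hAₙ] at hmap
    exact ⟨J', hJ', Or.inl (vertSeq_eq_leftFirst (by simpa using hmap)), harr⟩
  · rw [hJA₀] at hJ₀ ⊢
    obtain ⟨J', hJ', hmap, harr⟩ := hJ₀.exists_map_eq_sweep_append_sweep hG
    rw [hA₀, hAₙ] at hmap
    exact ⟨J', hJ', Or.inr (vertSeq_eq_rightFirst (by simpa using hmap)), harr⟩

end TVG

/-- For a TVG of class `R` whose underlying graph is the path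
`v_0 v_1 … v_n`, with the agent starting at `v_k` at time `0`, some optimal solution to
DMVP has as underlying walk one of the two monotone sweeps (first to `v_0` then to
`v_n`, or first to `v_n` then to `v_0`). -/
theorem dmvp_path_two_sweeps (n : ℕ) (𝒢 : TVG (Fin (n + 1)))
    (hG : 𝒢.G = SimpleGraph.pathGraph (n + 1)) (hR : 𝒢.ClassR) (k : Fin (n + 1)) :
    ∃ J, 𝒢.IsCoveringFrom J k ∧
      (∀ J', 𝒢.IsCoveringFrom J' k → arrival J 0 ≤ arrival J' 0) ∧
      (vertSeq J k = leftFirst n k.val ∨ vertSeq J k = rightFirst n k.val) := by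
  obtain ⟨J₀, hJ₀⟩ := exists_isCoveringFrom hG hR.2 k
  obtain ⟨J, hJ, hmin⟩ :=
    (measure fun J => arrival J 0).wf.has_min {J | 𝒢.IsCoveringFrom J k} ⟨J₀, hJ₀⟩
  obtain ⟨J', hJ', hsweep, hle⟩ := hJ.exists_sweeps_le hG
  exact ⟨J', isCoveringFrom_of_vertSeq hJ' hsweep,
    fun J'' hJ'' => hle.trans (not_lt.1 (hmin J'' hJ'')), hsweep⟩
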